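/- arXiv:2401.03911 — 2 statements merged into one kernel-verified Lean document; each statement's English description precedes it below -/
import Mathlib

section
/- Strengthened weighted Poincaré inequality: There is a constant C > 0 such that for every C¹ function g on [-1,1] satisfying ∫_{-1}^{1} h_s(ξ) g(ξ) dξ = 0, one has ∫_{-1}^{1} |g(ξ)|² dξ ≤ C ∫_{-1}^{1} h_s(ξ) |g'(ξ)|² dξ. -/
/-!
Since `hs x = (cosh 1 - cosh x) / sinh 1` and `cosh 1 - cosh x ≥ (1 - x²) / 2` on `[-1, 1]`,
the reciprocal weight satisfies `(hs x)⁻¹ ≤ 2 sinh 1 · artanh' x`. Cauchy–Schwarz with weight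
`hs` applied to `g x - g 0 = ∫₀ˣ g'` gives `(g x - g 0)² ≤ 2 sinh 1 · |artanh x| · ∫ hs g'²`,
and `artanh` is integrable on `[-1, 1]`. Finally, as the `hs`-mean of `g` vanishes,
`g 0² · ∫ hs ≤ ∫ hs (g - g 0)²`, so `∫ g²` is controlled by `∫ (g - g 0)²`.
-/

noncomputable def hs : ℝ → ℝ := fun x =>
  (Real.exp 1 ^ 2 + 1) / (Real.exp 1 ^ 2 - 1) -
    (Real.exp (x + 1) + Real.exp (1 - x)) / (Real.exp 1 ^ 2 - 1)

open Real Set intervalIntegral MeasureTheory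

namespace Real

theorem sq_sub_sq_le_two_mul_cosh_sub_cosh {x y : ℝ} (h : |x| ≤ |y|) :
    y ^ 2 - x ^ 2 ≤ 2 * (cosh y - cosh x) := by
  have key : ∀ u v : ℝ, 0 ≤ u → 0 ≤ v →
      (u + v) ^ 2 - (u - v) ^ 2 ≤ 2 * (cosh (u + v) - cosh (u - v)) := by
    intro u v hu hv
    rw [cosh_add, cosh_sub]
    nlinarith [self_le_sinh_iff.2 hu, self_le_sinh_iff.2 hv,
      mul_nonneg hu (sub_nonneg.2 (self_le_sinh_iff.2 hv)), mul_nonneg hv hu]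
  have := key ((|y| + |x|) / 2) ((|y| - |x|) / 2) (by positivity) (by linarith)
  rw [← cosh_abs x, ← cosh_abs y, ← sq_abs x, ← sq_abs y]
  convert this using 3 <;> ring_nf

theorem artanh_eq_log_sub_log_div_two {x : ℝ} (hx : x ∈ Ioo (-1) 1) :
    artanh x = (log (1 + x) - log (1 - x)) / 2 := by
  have h1 : 1 + x ≠ 0 := by linarith [hx.1]
  have h2 : 1 - x ≠ 0 := by linarith [hx.2]
  rw [artanh_eq_half_log (Ioo_subset_Icc_self hx), log_div h1 h2]
  ring

theorem hasDerivAt_artanh {x : ℝ} (hx : x ∈ Ioo (-1) 1) :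
    HasDerivAt artanh (1 - x ^ 2)⁻¹ x := by
  have h1 : 1 + x ≠ 0 := by linarith [hx.1]
  have h2 : 1 - x ≠ 0 := by linarith [hx.2]
  have hlog : HasDerivAt (fun y => (log (1 + y) - log (1 - y)) / 2) (1 - x ^ 2)⁻¹ x := by
    refine ((((hasDerivAt_id' x).const_add 1).log h1).fun_sub
      (((hasDerivAt_id' x).const_sub 1).log h2) |>.div_const 2).congr_deriv ?_
    rw [show 1 - x ^ 2 = (1 + x) * (1 - x) by ring]
    field_simp
    ring
  exact hlog.congr_of_eventuallyEq <| Filter.eventually_of_mem (isOpen_Ioo.mem_nhds hx)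
    fun y hy => artanh_eq_log_sub_log_div_two hy

theorem intervalIntegrable_artanh : IntervalIntegrable artanh volume (-1) 1 := by
  have hp : IntervalIntegrable (fun x => log (1 + x)) volume (-1) 1 := by
    simpa [show (2 : ℝ) - 1 = 1 by norm_num] using
      (intervalIntegrable_log' (a := 0) (b := 2)).comp_add_left 1
  have hm : IntervalIntegrable (fun x => log (1 - x)) volume (-1) 1 := by
    simpa [show (1 : ℝ) - 2 = -1 by norm_num] using
      (intervalIntegrable_log' (a := 2) (b := 0)).comp_sub_left 1
  refine ((hp.sub hm).div_const 2).congr_uIoo fun x hx => ?_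
  rw [uIoo_of_le (by norm_num)] at hx
  exact (artanh_eq_log_sub_log_div_two hx).symm

end Real

section WeightedIntegrals

variable {a b : ℝ}

theorem sq_integral_le_integral_mul_sq_mul_integral_inv {f w : ℝ → ℝ} (hab : a ≤ b)
    (hf : ContinuousOn f (Icc a b)) (hw : ContinuousOn w (Icc a b))
    (hw_pos : ∀ x ∈ Icc a b, 0 < w x) :
    (∫ x in a..b, f x) ^ 2 ≤ (∫ x in a..b, w x * f x ^ 2) * ∫ x in a..b, (w x)⁻¹ := by
  have hI : uIcc a b = Icc a b := uIcc_of_le hab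
  have hwf : IntervalIntegrable (fun x => w x * f x ^ 2) volume a b :=
    ((hw.mul (hf.pow 2)).mono hI.subset).intervalIntegrable
  have hf' : IntervalIntegrable f volume a b := (hf.mono hI.subset).intervalIntegrable
  have hwinv : IntervalIntegrable (fun x => (w x)⁻¹) volume a b :=
    ((hw.inv₀ fun x hx => (hw_pos x hx).ne').mono hI.subset).intervalIntegrable
  -- `∫ w (t f - w⁻¹)² ≥ 0` is a quadratic in `t`, so its discriminant is nonpositive.
  have hquad : ∀ t : ℝ, 0 ≤ (∫ x in a..b, w x * f x ^ 2) * (t * t) +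
      (-2 * ∫ x in a..b, f x) * t + ∫ x in a..b, (w x)⁻¹ := by
    intro t
    have hexpand : EqOn (fun x => w x * (t * f x - (w x)⁻¹) ^ 2)
        (fun x => t ^ 2 * (w x * f x ^ 2) - 2 * t * f x + (w x)⁻¹) (uIcc a b) := by
      intro x hx
      have := (hw_pos x (hI ▸ hx)).ne'
      field_simp
      ring
    calc 0 ≤ ∫ x in a..b, w x * (t * f x - (w x)⁻¹) ^ 2 :=
          integral_nonneg hab fun x hx => mul_nonneg (hw_pos x hx).le (sq_nonneg _)
      _ = _ := by
          rw [integral_congr hexpand,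
            integral_add ((hwf.const_mul _).sub (hf'.const_mul _)) hwinv,
            integral_sub (hwf.const_mul _) (hf'.const_mul _),
            intervalIntegral.integral_const_mul, intervalIntegral.integral_const_mul]
          ring
  have := discrim_le_zero hquad
  rw [discrim] at this
  nlinarith

theorem sq_mul_integral_le_integral_mul_sq_sub {w g : ℝ → ℝ} (c : ℝ) (hab : a ≤ b)
    (hw : ContinuousOn w (Icc a b)) (hg : ContinuousOn g (Icc a b))
    (hw_nonneg : ∀ x ∈ Icc a b, 0 ≤ w x) (hmean : ∫ x in a..b, w x * g x = 0) :
    c ^ 2 * ∫ x in a..b, w x ≤ ∫ x in a..b, w x * (g x - c) ^ 2 := by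
  have hI : uIcc a b = Icc a b := uIcc_of_le hab
  have hw' : IntervalIntegrable w volume a b := (hw.mono hI.subset).intervalIntegrable
  have hwg : IntervalIntegrable (fun x => w x * g x) volume a b :=
    ((hw.mul hg).mono hI.subset).intervalIntegrable
  have hwgc : IntervalIntegrable (fun x => w x * (g x - c) ^ 2) volume a b :=
    ((hw.mul ((hg.sub continuousOn_const).pow 2)).mono hI.subset).intervalIntegrable
  calc c ^ 2 * ∫ x in a..b, w x
      = ∫ x in a..b, (c ^ 2 * w x - 2 * c * (w x * g x)) := by
        rw [integral_sub (hw'.const_mul _) (hwg.const_mul _), intervalIntegral.integral_const_mul,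
          intervalIntegral.integral_const_mul, hmean, mul_zero, sub_zero]
    _ ≤ ∫ x in a..b, w x * (g x - c) ^ 2 :=
        integral_mono_on hab ((hw'.const_mul _).sub (hwg.const_mul _)) hwgc fun x hx => by
          nlinarith [mul_nonneg (hw_nonneg x hx) (sq_nonneg (g x))]

theorem integral_sq_le_of_integral_mul_eq_zero {w g : ℝ → ℝ} {K : ℝ} (c : ℝ) (hab : a ≤ b)
    (hw : ContinuousOn w (Icc a b)) (hg : ContinuousOn g (Icc a b))
    (hw_nonneg : ∀ x ∈ Icc a b, 0 ≤ w x) (hw_le : ∀ x ∈ Icc a b, w x ≤ K)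
    (hw_int : 0 < ∫ x in a..b, w x) (hmean : ∫ x in a..b, w x * g x = 0) :
    ∫ x in a..b, g x ^ 2 ≤
      (2 + 2 * (b - a) * K / ∫ x in a..b, w x) * ∫ x in a..b, (g x - c) ^ 2 := by
  have hI : uIcc a b = Icc a b := uIcc_of_le hab
  have hgc : IntervalIntegrable (fun x => (g x - c) ^ 2) volume a b :=
    (((hg.sub continuousOn_const).pow 2).mono hI.subset).intervalIntegrable
  set M := ∫ x in a..b, w x
  set D := ∫ x in a..b, (g x - c) ^ 2
  have hc : c ^ 2 * M ≤ K * D := by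
    calc c ^ 2 * M ≤ ∫ x in a..b, w x * (g x - c) ^ 2 :=
          sq_mul_integral_le_integral_mul_sq_sub c hab hw hg hw_nonneg hmean
      _ ≤ ∫ x in a..b, K * (g x - c) ^ 2 :=
          integral_mono_on hab
            ((hw.mul ((hg.sub continuousOn_const).pow 2)).mono hI.subset).intervalIntegrable
            (hgc.const_mul K) fun x hx => mul_le_mul_of_nonneg_right (hw_le x hx) (sq_nonneg _)
      _ = K * D := intervalIntegral.integral_const_mul K _
  have hsplit : ∫ x in a..b, g x ^ 2 ≤ 2 * D + 2 * (b - a) * c ^ 2 := by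
    calc ∫ x in a..b, g x ^ 2 ≤ ∫ x in a..b, (2 * (g x - c) ^ 2 + 2 * c ^ 2) :=
          integral_mono_on hab ((hg.pow 2).mono hI.subset).intervalIntegrable
            ((hgc.const_mul 2).add intervalIntegrable_const) fun x _ => by
            nlinarith [sq_nonneg (g x - 2 * c)]
      _ = 2 * D + 2 * (b - a) * c ^ 2 := by
          rw [integral_add (hgc.const_mul 2) intervalIntegrable_const,
            intervalIntegral.integral_const_mul, intervalIntegral.integral_const, smul_eq_mul]
          ring
  have hc' : c ^ 2 ≤ K * D / M := by rwa [le_div_iff₀ hw_int]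
  calc ∫ x in a..b, g x ^ 2 ≤ 2 * D + 2 * (b - a) * (K * D / M) := by
        nlinarith [sub_nonneg.2 hab]
    _ = (2 + 2 * (b - a) * K / M) * D := by ring

theorem ContDiffOn.intervalIntegrable_mul_deriv_sq {g w : ℝ → ℝ} (hab : a < b)
    (hg : ContDiffOn ℝ 1 g (Icc a b)) (hw : ContinuousOn w (Icc a b)) :
    IntervalIntegrable (fun x => w x * deriv g x ^ 2) volume a b := by
  have hcont : ContinuousOn (fun x => w x * derivWithin g (Icc a b) x ^ 2) (uIcc a b) := by
    rw [uIcc_of_le hab.le]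
    exact hw.mul ((hg.continuousOn_derivWithin (uniqueDiffOn_Icc hab) le_rfl).pow 2)
  refine hcont.intervalIntegrable.congr_uIoo fun x hx => ?_
  rw [uIoo_of_le hab.le] at hx
  simp only [derivWithin_of_mem_nhds (Icc_mem_nhds hx.1 hx.2)]

end WeightedIntegrals

theorem continuous_hs : Continuous hs := by
  unfold hs
  fun_prop

theorem hs_eq_cosh_sub_cosh (x : ℝ) : hs x = (cosh 1 - cosh x) / sinh 1 := by
  have he : exp 1 ^ 2 - 1 ≠ 0 := by nlinarith [add_one_lt_exp (one_ne_zero (α := ℝ))]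
  rw [hs, cosh_eq, cosh_eq, sinh_eq, exp_add, exp_sub, exp_neg, exp_neg]
  field_simp

theorem hs_le_cosh_div_sinh (x : ℝ) : hs x ≤ cosh 1 / sinh 1 := by
  rw [hs_eq_cosh_sub_cosh]
  exact div_le_div_of_nonneg_right (by linarith [cosh_pos x]) (by positivity)

theorem one_sub_sq_div_le_hs {x : ℝ} (hx : x ∈ Icc (-1) 1) :
    (1 - x ^ 2) / (2 * sinh 1) ≤ hs x := by
  have hcosh : 1 - x ^ 2 ≤ 2 * (cosh 1 - cosh x) := by
    simpa using sq_sub_sq_le_two_mul_cosh_sub_cosh (y := 1) (x := x) (by simpa using abs_le.2 hx)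
  rw [hs_eq_cosh_sub_cosh, div_le_div_iff₀ (by positivity) (by positivity)]
  nlinarith [sinh_pos_iff.2 (one_pos (α := ℝ))]

theorem hs_nonneg {x : ℝ} (hx : x ∈ Icc (-1) 1) : 0 ≤ hs x :=
  (div_nonneg (by nlinarith [hx.1, hx.2]) (by positivity)).trans (one_sub_sq_div_le_hs hx)

theorem hs_pos {x : ℝ} (hx : x ∈ Ioo (-1) 1) : 0 < hs x :=
  (div_pos (by nlinarith [hx.1, hx.2]) (by positivity)).trans_le
    (one_sub_sq_div_le_hs (Ioo_subset_Icc_self hx))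

theorem inv_hs_le {x : ℝ} (hx : x ∈ Ioo (-1) 1) : (hs x)⁻¹ ≤ 2 * sinh 1 * (1 - x ^ 2)⁻¹ := by
  have h : 0 < 1 - x ^ 2 := by nlinarith [hx.1, hx.2]
  calc (hs x)⁻¹ ≤ ((1 - x ^ 2) / (2 * sinh 1))⁻¹ :=
        inv_anti₀ (by positivity) (one_sub_sq_div_le_hs (Ioo_subset_Icc_self hx))
    _ = 2 * sinh 1 * (1 - x ^ 2)⁻¹ := by rw [inv_div, div_eq_mul_inv]

theorem sq_sub_le_mul_artanh_sub {g : ℝ → ℝ} (hg : ContDiffOn ℝ 1 g (Icc (-1) 1)) {a b : ℝ}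
    (ha : -1 < a) (hab : a ≤ b) (hb : b < 1) :
    (g b - g a) ^ 2 ≤
      (∫ x in (-1 : ℝ)..1, hs x * deriv g x ^ 2) * (2 * sinh 1 * (artanh b - artanh a)) := by
  have hsub : Icc a b ⊆ Ioo (-1) 1 := Icc_subset_Ioo ha hb
  have hI : uIcc a b = Icc a b := uIcc_of_le hab
  have hg' : ContDiffOn ℝ 1 g (Ioo (-1) 1) := hg.mono Ioo_subset_Icc_self
  have hdg : ContinuousOn (deriv g) (Icc a b) :=
    (hg'.continuousOn_deriv_of_isOpen isOpen_Ioo le_rfl).mono hsub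
  have hinv : ContinuousOn (fun x : ℝ => (1 - x ^ 2)⁻¹) (Icc a b) :=
    (continuousOn_const.sub (continuousOn_pow 2)).inv₀ fun x hx => by
      simp only [Pi.sub_apply]
      nlinarith [(hsub hx).1, (hsub hx).2]
  have hftc : ∫ x in a..b, deriv g x = g b - g a :=
    integral_deriv_eq_sub (fun x hx => (hg'.contDiffAt (isOpen_Ioo.mem_nhds (hsub (hI ▸ hx)))
      |>.differentiableAt one_ne_zero)) (hdg.mono hI.subset).intervalIntegrable
  have henergy :
      ∫ x in a..b, hs x * deriv g x ^ 2 ≤ ∫ x in (-1 : ℝ)..1, hs x * deriv g x ^ 2 :=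
    integral_mono_interval ha.le hab hb.le
      (ae_restrict_of_forall_mem measurableSet_Ioc fun x hx =>
        mul_nonneg (hs_nonneg (Ioc_subset_Icc_self hx)) (sq_nonneg _))
      (hg.intervalIntegrable_mul_deriv_sq (by norm_num) continuous_hs.continuousOn)
  have hweight : ∫ x in a..b, (hs x)⁻¹ ≤ 2 * sinh 1 * (artanh b - artanh a) := by
    calc ∫ x in a..b, (hs x)⁻¹ ≤ ∫ x in a..b, 2 * sinh 1 * (1 - x ^ 2)⁻¹ :=
          integral_mono_on hab
            ((continuous_hs.continuousOn.inv₀ fun x hx => (hs_pos (hsub (hI ▸ hx))).ne').mono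
              hI.subset |>.intervalIntegrable)
            ((hinv.mono hI.subset).intervalIntegrable.const_mul _)
            fun x hx => inv_hs_le (hsub hx)
      _ = 2 * sinh 1 * (artanh b - artanh a) := by
          rw [intervalIntegral.integral_const_mul, integral_eq_sub_of_hasDerivAt
            (fun x hx => hasDerivAt_artanh (hsub (hI ▸ hx)))
            (hinv.mono hI.subset).intervalIntegrable]
  rw [← hftc]
  calc (∫ x in a..b, deriv g x) ^ 2
      ≤ (∫ x in a..b, hs x * deriv g x ^ 2) * ∫ x in a..b, (hs x)⁻¹ :=
        sq_integral_le_integral_mul_sq_mul_integral_inv hab hdg continuous_hs.continuousOn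
          fun x hx => hs_pos (hsub hx)
    _ ≤ _ := mul_le_mul henergy hweight
        (integral_nonneg hab fun x hx => inv_nonneg.2 (hs_pos (hsub hx)).le)
        (integral_nonneg (by norm_num) fun x hx => mul_nonneg (hs_nonneg hx) (sq_nonneg _))

theorem sq_sub_apply_zero_le_mul_abs_artanh {g : ℝ → ℝ} (hg : ContDiffOn ℝ 1 g (Icc (-1) 1))
    {x : ℝ} (hx : x ∈ Ioo (-1) 1) :
    (g x - g 0) ^ 2 ≤ (∫ t in (-1 : ℝ)..1, hs t * deriv g t ^ 2) * (2 * sinh 1 * |artanh x|) := by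
  rcases le_total 0 x with h0 | h0
  · simpa [artanh_zero, abs_of_nonneg (artanh_nonneg h0)] using
      sq_sub_le_mul_artanh_sub hg (by norm_num) h0 hx.2
  · rw [← neg_sub, neg_sq]
    simpa [artanh_zero, abs_of_nonpos (artanh_nonpos h0)] using
      sq_sub_le_mul_artanh_sub hg hx.1 h0 (by norm_num)

theorem integral_sq_sub_apply_zero_le {g : ℝ → ℝ} (hg : ContDiffOn ℝ 1 g (Icc (-1) 1)) :
    ∫ x in (-1 : ℝ)..1, (g x - g 0) ^ 2 ≤
      (2 * sinh 1 * ∫ x in (-1 : ℝ)..1, |artanh x|) *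
        ∫ x in (-1 : ℝ)..1, hs x * deriv g x ^ 2 := by
  have hcont : ContinuousOn (fun x => (g x - g 0) ^ 2) (uIcc (-1) 1) :=
    (hg.continuousOn.sub continuousOn_const).pow 2 |>.mono (uIcc_of_le (by norm_num)).subset
  calc ∫ x in (-1 : ℝ)..1, (g x - g 0) ^ 2
      ≤ ∫ x in (-1 : ℝ)..1,
          (∫ t in (-1 : ℝ)..1, hs t * deriv g t ^ 2) * (2 * sinh 1 * |artanh x|) :=
        integral_mono_on_of_le_Ioo (by norm_num) hcont.intervalIntegrable
          ((intervalIntegrable_artanh.abs.const_mul _).const_mul _)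
          fun x hx => sq_sub_apply_zero_le_mul_abs_artanh hg hx
    _ = _ := by
        rw [intervalIntegral.integral_const_mul, intervalIntegral.integral_const_mul]
        ring

theorem stmt_8 :
    ∃ C > (0 : ℝ), ∀ g : ℝ → ℝ, ContDiffOn ℝ 1 g (Set.Icc (-1 : ℝ) 1) →
      (∫ ξ in (-1 : ℝ)..1, hs ξ * g ξ) = 0 →
      ∫ ξ in (-1 : ℝ)..1, (g ξ) ^ 2 ≤
        C * ∫ ξ in (-1 : ℝ)..1, hs ξ * (deriv g ξ) ^ 2 := by
  set M := ∫ x in (-1 : ℝ)..1, hs x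
  set A := 2 + 2 * (1 - -1) * (cosh 1 / sinh 1) / M
  set Λ := 2 * sinh 1 * ∫ x in (-1 : ℝ)..1, |artanh x|
  have hM : 0 < M := intervalIntegral_pos_of_pos_on (continuous_hs.intervalIntegrable _ _)
    (fun x hx => hs_pos hx) (by norm_num)
  have hA : 0 ≤ A := by positivity
  have hΛ : 0 ≤ Λ :=
    mul_nonneg (by positivity) (integral_nonneg (by norm_num) fun x _ => abs_nonneg _)
  refine ⟨A * Λ + 1, by positivity, fun g hg hmean => ?_⟩
  have hE : 0 ≤ ∫ x in (-1 : ℝ)..1, hs x * deriv g x ^ 2 :=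
    integral_nonneg (by norm_num) fun x hx => mul_nonneg (hs_nonneg hx) (sq_nonneg _)
  calc ∫ x in (-1 : ℝ)..1, g x ^ 2 ≤ A * ∫ x in (-1 : ℝ)..1, (g x - g 0) ^ 2 :=
        integral_sq_le_of_integral_mul_eq_zero (g 0) (by norm_num) continuous_hs.continuousOn
          hg.continuousOn (fun x hx => hs_nonneg hx) (fun x _ => hs_le_cosh_div_sinh x) hM hmean
    _ ≤ A * (Λ * ∫ x in (-1 : ℝ)..1, hs x * deriv g x ^ 2) :=
        mul_le_mul_of_nonneg_left (integral_sq_sub_apply_zero_le hg) hA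
    _ ≤ (A * Λ + 1) * ∫ x in (-1 : ℝ)..1, hs x * deriv g x ^ 2 := by nlinarith
end

section
/- Dissipation identity for the linearized system: if θ is a smooth solution on [-1,1]×[0,∞) of h_s ∂_{tt}θ - 2∂_ξ[(h_s² + 2|h_s'|² - 4h_s h_s'')∂_ξθ] + 2∂_{ξξ}(h_s² ∂_{ξξ}θ) = 2∂_ξ(h_s ∂_{ξt}θ) with ∂_ξθ(±1,t)=0, then d/dt [ (1/2)∫ h_s |∂_tθ|² + ∫(2|h_s'|² - 4h_s h_s'' + h_s²)|∂_ξθ|² + ∫ h_s² |∂_{ξξ}θ|² ] dξ = -2 ∫ h_s |∂_{ξt}θ|² dξ, where all integrals are over (-1,1). -/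
open Real intervalIntegral MeasureTheory Set

lemma one_le_inf : ((⊤ : ℕ∞) : WithTop ℕ∞) ≠ 0 := by
  simp

noncomputable def pd1 (f : ℝ × ℝ → ℝ) : ℝ × ℝ → ℝ := fun p => fderiv ℝ f p (1, 0)
noncomputable def pd2 (f : ℝ × ℝ → ℝ) : ℝ × ℝ → ℝ := fun p => fderiv ℝ f p (0, 1)

lemma contDiff_pd1 {f : ℝ × ℝ → ℝ} (hf : ContDiff ℝ (⊤ : ℕ∞) f) : ContDiff ℝ (⊤ : ℕ∞) (pd1 f) :=
  (hf.fderiv_right (le_of_eq ENat.coe_top_add_one)).clm_apply contDiff_const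

lemma contDiff_pd2 {f : ℝ × ℝ → ℝ} (hf : ContDiff ℝ (⊤ : ℕ∞) f) : ContDiff ℝ (⊤ : ℕ∞) (pd2 f) :=
  (hf.fderiv_right (le_of_eq ENat.coe_top_add_one)).clm_apply contDiff_const

lemma hasDerivAt_pd1 {f : ℝ × ℝ → ℝ} (hf : ContDiff ℝ (⊤ : ℕ∞) f) (x t : ℝ) :
    HasDerivAt (fun y => f (y, t)) (pd1 f (x, t)) x := by
  have h := (hf.differentiable one_le_inf (x, t)).hasFDerivAt
  have h2 : HasDerivAt (fun y : ℝ => (y, t)) ((1 : ℝ), (0 : ℝ)) x :=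
    (hasDerivAt_id x).prodMk (hasDerivAt_const x t)
  exact h.comp_hasDerivAt x h2

lemma hasDerivAt_pd2 {f : ℝ × ℝ → ℝ} (hf : ContDiff ℝ (⊤ : ℕ∞) f) (x t : ℝ) :
    HasDerivAt (fun τ => f (x, τ)) (pd2 f (x, t)) t := by
  have h := (hf.differentiable one_le_inf (x, t)).hasFDerivAt
  have h2 : HasDerivAt (fun τ : ℝ => (x, τ)) ((0 : ℝ), (1 : ℝ)) t :=
    (hasDerivAt_const t x).prodMk (hasDerivAt_id t)
  exact h.comp_hasDerivAt t h2

lemma pd_comm {f : ℝ × ℝ → ℝ} (hf : ContDiff ℝ (⊤ : ℕ∞) f) : pd2 (pd1 f) = pd1 (pd2 f) := by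
  funext p
  have hd : ∀ q, HasFDerivAt f (fderiv ℝ f q) q := fun q =>
    (hf.differentiable one_le_inf q).hasFDerivAt
  have hd2 : HasFDerivAt (fderiv ℝ f) (fderiv ℝ (fderiv ℝ f) p) p :=
    (((hf.fderiv_right (le_of_eq ENat.coe_top_add_one)).differentiable one_le_inf) p).hasFDerivAt
  have hsym := second_derivative_symmetric hd hd2 (1, 0) (0, 1)
  have key : ∀ v w : ℝ × ℝ, fderiv ℝ (fun q => fderiv ℝ f q v) p w =
      fderiv ℝ (fderiv ℝ f) p w v := by
    intro v w
    rw [fderiv_clm_apply hd2.differentiableAt (differentiableAt_const v)]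
    simp
  show fderiv ℝ (fun q => fderiv ℝ f q (1,0)) p (0,1) = fderiv ℝ (fun q => fderiv ℝ f q (0,1)) p (1,0)
  rw [key, key]
  exact hsym.symm

lemma contDiff_hs : ContDiff ℝ (⊤ : ℕ∞) hs := by
  unfold hs
  exact contDiff_const.sub
    (((Real.contDiff_exp.comp (contDiff_id.add contDiff_const)).add
      (Real.contDiff_exp.comp (contDiff_const.sub contDiff_id))).div_const _)

lemma hs_one : hs 1 = 0 := by
  unfold hs
  have h1 : Real.exp (1 + 1) = Real.exp 1 ^ 2 := by rw [Real.exp_add]; ring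
  rw [show (1:ℝ) - 1 = 0 by ring, Real.exp_zero, h1]
  ring

lemma hs_neg_one : hs (-1) = 0 := by
  unfold hs
  have h1 : Real.exp (1 - -1) = Real.exp 1 ^ 2 := by
    rw [show (1:ℝ) - -1 = 1 + 1 by ring, Real.exp_add]; ring
  rw [show (-1:ℝ) + 1 = 0 by ring, Real.exp_zero, h1]
  ring

lemma cont_deriv {f : ℝ → ℝ} (hf : ContDiff ℝ (⊤ : ℕ∞) f) : ContDiff ℝ (⊤ : ℕ∞) (deriv f) :=
  (contDiff_infty_iff_deriv.mp hf).2

lemma slice1 {F : ℝ × ℝ → ℝ} (hF : ContDiff ℝ (⊤ : ℕ∞) F) (t : ℝ) :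
    ContDiff ℝ (⊤ : ℕ∞) (fun y => F (y, t)) :=
  hF.comp (contDiff_id.prodMk contDiff_const)

open Metric in
lemma leibniz (G : ℝ × ℝ → ℝ) (hG : ContDiff ℝ (⊤ : ℕ∞) G) (t : ℝ) :
    HasDerivAt (fun τ => ∫ ξ in (-1 : ℝ)..1, G (ξ, τ))
      (∫ ξ in (-1 : ℝ)..1, pd2 G (ξ, t)) t := by
  have hcont : Continuous (pd2 G) := (contDiff_pd2 hG).continuous
  obtain ⟨C, hC⟩ : ∃ C, ∀ p ∈ (Icc (-1 : ℝ) 1 ×ˢ Icc (t - 1) (t + 1)), ‖pd2 G p‖ ≤ C := by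
    obtain ⟨C, hC⟩ := (isCompact_Icc.prod isCompact_Icc).exists_bound_of_continuousOn
      hcont.continuousOn
    exact ⟨C, hC⟩
  have key := intervalIntegral.hasDerivAt_integral_of_dominated_loc_of_deriv_le
    (F := fun τ ξ => G (ξ, τ)) (F' := fun τ ξ => pd2 G (ξ, τ)) (a := (-1:ℝ)) (b := 1)
    (μ := volume) (x₀ := t) (bound := fun _ => C) (s := ball t 1) (ball_mem_nhds t one_pos)
    ?_ ?_ ?_ ?_ ?_ ?_
  · exact key.2
  · exact Filter.Eventually.of_forall fun τ =>
      (hG.continuous.comp (continuous_id.prodMk continuous_const)).aestronglyMeasurable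
  · exact ((hG.continuous.comp (continuous_id.prodMk continuous_const))).intervalIntegrable _ _
  · exact (hcont.comp (continuous_id.prodMk continuous_const)).aestronglyMeasurable
  · refine Filter.Eventually.of_forall fun ξ hξ τ hτ => ?_
    have hξ' : ξ ∈ Icc (-1:ℝ) 1 := by
      rw [uIoc_of_le (by norm_num : (-1:ℝ) ≤ 1)] at hξ
      exact ⟨le_of_lt hξ.1, hξ.2⟩
    have hτ' : τ ∈ Icc (t - 1) (t + 1) := by
      rw [mem_ball, Real.dist_eq, abs_lt] at hτ
      constructor <;> linarith [hτ.1, hτ.2]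
    exact hC (ξ, τ) ⟨hξ', hτ'⟩
  · exact intervalIntegrable_const
  · exact Filter.Eventually.of_forall fun ξ _ τ _ => hasDerivAt_pd2 hG ξ τ

theorem stmt_18 (θ : ℝ → ℝ → ℝ)
    (hθ : ContDiff ℝ (⊤ : ℕ∞) fun p : ℝ × ℝ => θ p.1 p.2)
    (hbc : ∀ t : ℝ, deriv (fun y => θ y t) (-1) = 0 ∧
      deriv (fun y => θ y t) 1 = 0)
    (hpde : ∀ t : ℝ, ∀ ξ ∈ Set.Icc (-1 : ℝ) 1,
      hs ξ * deriv (deriv fun τ => θ ξ τ) t -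
        2 * deriv (fun y =>
          (hs y ^ 2 + 2 * (deriv hs y) ^ 2 - 4 * hs y * deriv (deriv hs) y) *
            deriv (fun z => θ z t) y) ξ +
        2 * deriv (deriv fun y => hs y ^ 2 * deriv (deriv fun z => θ z t) y) ξ =
      2 * deriv (fun y => hs y * deriv (fun z => deriv (fun τ => θ z τ) t) y) ξ) :
    ∀ t : ℝ,
      deriv (fun τ =>
        (1 / 2) * (∫ ξ in (-1 : ℝ)..1, hs ξ * (deriv (fun s => θ ξ s) τ) ^ 2) +
        (∫ ξ in (-1 : ℝ)..1,
          (2 * (deriv hs ξ) ^ 2 - 4 * hs ξ * deriv (deriv hs) ξ + hs ξ ^ 2) *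
            (deriv (fun y => θ y τ) ξ) ^ 2) +
        ∫ ξ in (-1 : ℝ)..1,
          hs ξ ^ 2 * (deriv (deriv fun y => θ y τ) ξ) ^ 2) t =
      -2 * ∫ ξ in (-1 : ℝ)..1,
        hs ξ * (deriv (fun y => deriv (fun τ => θ y τ) t) ξ) ^ 2 := by
  intro t
  -- the uncurried function
  set g : ℝ × ℝ → ℝ := fun p => θ p.1 p.2 with hgdef
  have hg : ContDiff ℝ (⊤ : ℕ∞) g := hθ.of_le (by simp)
  have hq : ContDiff ℝ (⊤ : ℕ∞) (pd2 g) := contDiff_pd2 hg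
  have hp1 : ContDiff ℝ (⊤ : ℕ∞) (pd1 g) := contDiff_pd1 hg
  have hu11 : ContDiff ℝ (⊤ : ℕ∞) (pd1 (pd1 g)) := contDiff_pd1 hp1
  have hm : ContDiff ℝ (⊤ : ℕ∞) (pd1 (pd2 g)) := contDiff_pd1 hq
  have hmm : ContDiff ℝ (⊤ : ℕ∞) (pd1 (pd1 (pd2 g))) := contDiff_pd1 hm
  -- pointwise identification of derivatives
  have e1 : ∀ ξ τ : ℝ, deriv (fun s => θ ξ s) τ = pd2 g (ξ, τ) :=
    fun ξ τ => (hasDerivAt_pd2 hg ξ τ).deriv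
  have e2 : ∀ ξ τ : ℝ, deriv (fun y => θ y τ) ξ = pd1 g (ξ, τ) :=
    fun ξ τ => (hasDerivAt_pd1 hg ξ τ).deriv
  have e3 : ∀ τ : ℝ, (deriv fun y => θ y τ) = fun y => pd1 g (y, τ) :=
    fun τ => funext fun ξ => e2 ξ τ
  have e4 : ∀ ξ τ : ℝ, deriv (deriv fun y => θ y τ) ξ = pd1 (pd1 g) (ξ, τ) := by
    intro ξ τ; rw [e3 τ]; exact (hasDerivAt_pd1 hp1 ξ τ).deriv
  have e5 : ∀ ξ τ : ℝ, deriv (fun z => deriv (fun s => θ z s) τ) ξ = pd1 (pd2 g) (ξ, τ) := by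
    intro ξ τ
    have : (fun z => deriv (fun s => θ z s) τ) = fun z => pd2 g (z, τ) :=
      funext fun z => e1 z τ
    rw [this]; exact (hasDerivAt_pd1 hq ξ τ).deriv
  have e6 : ∀ ξ τ : ℝ, deriv (deriv fun s => θ ξ s) τ = pd2 (pd2 g) (ξ, τ) := by
    intro ξ τ
    have : (deriv fun s => θ ξ s) = fun s => pd2 g (ξ, s) := funext fun s => e1 ξ s
    rw [this]; exact (hasDerivAt_pd2 hq ξ τ).deriv
  -- boundary conditions
  have bq1 : ∀ τ : ℝ, pd1 g (1, τ) = 0 := fun τ => by rw [← e2]; exact (hbc τ).2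
  have bqm1 : ∀ τ : ℝ, pd1 g (-1, τ) = 0 := fun τ => by rw [← e2]; exact (hbc τ).1
  -- hs facts
  have hhs := contDiff_hs
  have hdh : ContDiff ℝ (⊤ : ℕ∞) (deriv hs) := cont_deriv hhs
  have hddh : ContDiff ℝ (⊤ : ℕ∞) (deriv (deriv hs)) := cont_deriv hdh
  -- coefficient functions
  have hA : ContDiff ℝ (⊤ : ℕ∞)
      (fun y => hs y ^ 2 + 2 * (deriv hs y) ^ 2 - 4 * hs y * deriv (deriv hs) y) :=
    ((hhs.pow 2).add (contDiff_const.mul (hdh.pow 2))).sub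
      ((contDiff_const.mul hhs).mul hddh)
  -- integrand smoothness (two variables)
  have hG1 : ContDiff ℝ (⊤ : ℕ∞) (fun p : ℝ × ℝ => hs p.1 * pd2 g p ^ 2) :=
    (hhs.comp contDiff_fst).mul (hq.pow 2)
  have hG2 : ContDiff ℝ (⊤ : ℕ∞) (fun p : ℝ × ℝ =>
      (2 * (deriv hs p.1) ^ 2 - 4 * hs p.1 * deriv (deriv hs) p.1 + hs p.1 ^ 2) *
        pd1 g p ^ 2) := by
    refine ContDiff.mul ?_ (hp1.pow 2)
    exact ((contDiff_const.mul ((hdh.comp contDiff_fst).pow 2)).sub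
      ((contDiff_const.mul (hhs.comp contDiff_fst)).mul (hddh.comp contDiff_fst))).add
      ((hhs.comp contDiff_fst).pow 2)
  have hG3 : ContDiff ℝ (⊤ : ℕ∞) (fun p : ℝ × ℝ => hs p.1 ^ 2 * pd1 (pd1 g) p ^ 2) :=
    ((hhs.comp contDiff_fst).pow 2).mul (hu11.pow 2)
  -- rewrite the energy functional in pd-form
  have hfun : (fun τ =>
        (1 / 2) * (∫ ξ in (-1 : ℝ)..1, hs ξ * (deriv (fun s => θ ξ s) τ) ^ 2) +
        (∫ ξ in (-1 : ℝ)..1,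
          (2 * (deriv hs ξ) ^ 2 - 4 * hs ξ * deriv (deriv hs) ξ + hs ξ ^ 2) *
            (deriv (fun y => θ y τ) ξ) ^ 2) +
        ∫ ξ in (-1 : ℝ)..1,
          hs ξ ^ 2 * (deriv (deriv fun y => θ y τ) ξ) ^ 2) = (fun τ =>
        (1 / 2) * (∫ ξ in (-1 : ℝ)..1, hs ξ * pd2 g (ξ, τ) ^ 2) +
        (∫ ξ in (-1 : ℝ)..1,
          (2 * (deriv hs ξ) ^ 2 - 4 * hs ξ * deriv (deriv hs) ξ + hs ξ ^ 2) *
            pd1 g (ξ, τ) ^ 2) +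
        ∫ ξ in (-1 : ℝ)..1, hs ξ ^ 2 * pd1 (pd1 g) (ξ, τ) ^ 2) := by
    funext τ
    simp only [e1, e2, e4]
  rw [hfun]
  simp only [e5]
  -- differentiate under the integral sign
  have total : HasDerivAt (fun τ =>
        (1 / 2) * (∫ ξ in (-1 : ℝ)..1, hs ξ * pd2 g (ξ, τ) ^ 2) +
        (∫ ξ in (-1 : ℝ)..1,
          (2 * (deriv hs ξ) ^ 2 - 4 * hs ξ * deriv (deriv hs) ξ + hs ξ ^ 2) *
            pd1 g (ξ, τ) ^ 2) +
        ∫ ξ in (-1 : ℝ)..1, hs ξ ^ 2 * pd1 (pd1 g) (ξ, τ) ^ 2)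
      ((1 / 2) * (∫ ξ in (-1 : ℝ)..1,
          pd2 (fun p : ℝ × ℝ => hs p.1 * pd2 g p ^ 2) (ξ, t)) +
        (∫ ξ in (-1 : ℝ)..1,
          pd2 (fun p : ℝ × ℝ =>
            (2 * (deriv hs p.1) ^ 2 - 4 * hs p.1 * deriv (deriv hs) p.1 + hs p.1 ^ 2) *
              pd1 g p ^ 2) (ξ, t)) +
        ∫ ξ in (-1 : ℝ)..1,
          pd2 (fun p : ℝ × ℝ => hs p.1 ^ 2 * pd1 (pd1 g) p ^ 2) (ξ, t)) t := by
    exact (((leibniz _ hG1 t).const_mul (1/2 : ℝ)).add (leibniz _ hG2 t)).add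
      (leibniz _ hG3 t)
  rw [total.deriv]
  -- compute the time-derivatives of the integrands
  have c1 : ∀ ξ : ℝ, pd2 (fun p : ℝ × ℝ => hs p.1 * pd2 g p ^ 2) (ξ, t) =
      2 * (pd2 g (ξ, t) * (hs ξ * pd2 (pd2 g) (ξ, t))) := by
    intro ξ
    have h := ((hasDerivAt_pd2 hq ξ t).pow 2).const_mul (hs ξ)
    have h2 := (hasDerivAt_pd2 hG1 ξ t).unique h
    rw [h2]; norm_num; ring
  have c2 : ∀ ξ : ℝ, pd2 (fun p : ℝ × ℝ =>
      (2 * (deriv hs p.1) ^ 2 - 4 * hs p.1 * deriv (deriv hs) p.1 + hs p.1 ^ 2) *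
        pd1 g p ^ 2) (ξ, t) =
      2 * ((2 * (deriv hs ξ) ^ 2 - 4 * hs ξ * deriv (deriv hs) ξ + hs ξ ^ 2) *
        (pd1 g (ξ, t) * pd1 (pd2 g) (ξ, t))) := by
    intro ξ
    have h := ((hasDerivAt_pd2 hp1 ξ t).pow 2).const_mul
      (2 * (deriv hs ξ) ^ 2 - 4 * hs ξ * deriv (deriv hs) ξ + hs ξ ^ 2)
    have h2 := (hasDerivAt_pd2 hG2 ξ t).unique h
    rw [h2, pd_comm hg]; norm_num; ring
  have comm2 : pd2 (pd1 (pd1 g)) = pd1 (pd1 (pd2 g)) := by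
    rw [pd_comm hp1, pd_comm hg]
  have c3 : ∀ ξ : ℝ, pd2 (fun p : ℝ × ℝ => hs p.1 ^ 2 * pd1 (pd1 g) p ^ 2) (ξ, t) =
      2 * (hs ξ ^ 2 * (pd1 (pd1 g) (ξ, t) * pd1 (pd1 (pd2 g)) (ξ, t))) := by
    intro ξ
    have h := ((hasDerivAt_pd2 hu11 ξ t).pow 2).const_mul (hs ξ ^ 2)
    have h2 := (hasDerivAt_pd2 hG3 ξ t).unique h
    rw [h2, comm2]; norm_num; ring
  simp only [c1, c2, c3]
  rw [intervalIntegral.integral_const_mul, intervalIntegral.integral_const_mul,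
    intervalIntegral.integral_const_mul]
  -- one-variable smoothness at fixed t
  have hvA : ContDiff ℝ (⊤ : ℕ∞) (fun y =>
      (hs y ^ 2 + 2 * (deriv hs y) ^ 2 - 4 * hs y * deriv (deriv hs) y) * pd1 g (y, t)) :=
    hA.mul (slice1 hp1 t)
  have hv2 : ContDiff ℝ (⊤ : ℕ∞) (fun y => hs y ^ 2 * pd1 (pd1 g) (y, t)) :=
    (hhs.pow 2).mul (slice1 hu11 t)
  have hv3 : ContDiff ℝ (⊤ : ℕ∞) (fun y => hs y * pd1 (pd2 g) (y, t)) :=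
    hhs.mul (slice1 hm t)
  -- the PDE in pd-form
  have pde : ∀ ξ ∈ Icc (-1 : ℝ) 1,
      hs ξ * pd2 (pd2 g) (ξ, t) =
        2 * deriv (fun y =>
          (hs y ^ 2 + 2 * (deriv hs y) ^ 2 - 4 * hs y * deriv (deriv hs) y) *
            pd1 g (y, t)) ξ -
        2 * deriv (deriv fun y => hs y ^ 2 * pd1 (pd1 g) (y, t)) ξ +
        2 * deriv (fun y => hs y * pd1 (pd2 g) (y, t)) ξ := by
    intro ξ hξ
    have H := hpde t ξ hξ
    simp only [e2, e4, e5, e6] at H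
    linarith
  have huIcc : uIcc (-1 : ℝ) 1 = Icc (-1 : ℝ) 1 := uIcc_of_le (by norm_num)
  have J : (∫ x in (-1 : ℝ)..1, pd2 g (x, t) * (hs x * pd2 (pd2 g) (x, t))) =
      ∫ x in (-1 : ℝ)..1, pd2 g (x, t) *
        (2 * deriv (fun y =>
          (hs y ^ 2 + 2 * (deriv hs y) ^ 2 - 4 * hs y * deriv (deriv hs) y) *
            pd1 g (y, t)) x -
        2 * deriv (deriv fun y => hs y ^ 2 * pd1 (pd1 g) (y, t)) x +
        2 * deriv (fun y => hs y * pd1 (pd2 g) (y, t)) x) := by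
    apply intervalIntegral.integral_congr
    intro x hx
    rw [huIcc] at hx
    simp only [pde x hx]
  -- continuity facts
  have cq : Continuous fun x => pd2 g (x, t) := (slice1 hq t).continuous
  have cm : Continuous fun x => pd1 (pd2 g) (x, t) := (slice1 hm t).continuous
  have cmm : Continuous fun x => pd1 (pd1 (pd2 g)) (x, t) := (slice1 hmm t).continuous
  have ca : Continuous (deriv (fun y =>
      (hs y ^ 2 + 2 * (deriv hs y) ^ 2 - 4 * hs y * deriv (deriv hs) y) * pd1 g (y, t))) :=
    (cont_deriv hvA).continuous
  have cb1 : Continuous (deriv fun y => hs y ^ 2 * pd1 (pd1 g) (y, t)) :=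
    (cont_deriv hv2).continuous
  have cb : Continuous (deriv (deriv fun y => hs y ^ 2 * pd1 (pd1 g) (y, t))) :=
    (cont_deriv (cont_deriv hv2)).continuous
  have cc : Continuous (deriv fun y => hs y * pd1 (pd2 g) (y, t)) :=
    (cont_deriv hv3).continuous
  -- split the integral
  have split : (∫ x in (-1 : ℝ)..1, pd2 g (x, t) *
        (2 * deriv (fun y =>
          (hs y ^ 2 + 2 * (deriv hs y) ^ 2 - 4 * hs y * deriv (deriv hs) y) *
            pd1 g (y, t)) x -
        2 * deriv (deriv fun y => hs y ^ 2 * pd1 (pd1 g) (y, t)) x +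
        2 * deriv (fun y => hs y * pd1 (pd2 g) (y, t)) x)) =
      2 * (∫ x in (-1 : ℝ)..1, pd2 g (x, t) * deriv (fun y =>
          (hs y ^ 2 + 2 * (deriv hs y) ^ 2 - 4 * hs y * deriv (deriv hs) y) *
            pd1 g (y, t)) x) -
      2 * (∫ x in (-1 : ℝ)..1, pd2 g (x, t) *
          deriv (deriv fun y => hs y ^ 2 * pd1 (pd1 g) (y, t)) x) +
      2 * (∫ x in (-1 : ℝ)..1, pd2 g (x, t) *
          deriv (fun y => hs y * pd1 (pd2 g) (y, t)) x) := by
    rw [show (fun x => pd2 g (x, t) *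
        (2 * deriv (fun y =>
          (hs y ^ 2 + 2 * (deriv hs y) ^ 2 - 4 * hs y * deriv (deriv hs) y) *
            pd1 g (y, t)) x -
        2 * deriv (deriv fun y => hs y ^ 2 * pd1 (pd1 g) (y, t)) x +
        2 * deriv (fun y => hs y * pd1 (pd2 g) (y, t)) x)) = (fun x =>
        (2 * (pd2 g (x, t) * deriv (fun y =>
          (hs y ^ 2 + 2 * (deriv hs y) ^ 2 - 4 * hs y * deriv (deriv hs) y) *
            pd1 g (y, t)) x) -
        2 * (pd2 g (x, t) * deriv (deriv fun y => hs y ^ 2 * pd1 (pd1 g) (y, t)) x)) +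
        2 * (pd2 g (x, t) * deriv (fun y => hs y * pd1 (pd2 g) (y, t)) x))
      from funext fun x => by ring]
    erw [intervalIntegral.integral_add
      (((continuous_const.mul (cq.mul ca)).sub
        (continuous_const.mul (cq.mul cb))).intervalIntegrable _ _)
      ((continuous_const.mul (cq.mul cc)).intervalIntegrable _ _),
      intervalIntegral.integral_sub
      ((continuous_const.mul (cq.mul ca)).intervalIntegrable _ _)
      ((continuous_const.mul (cq.mul cb)).intervalIntegrable _ _),
      intervalIntegral.integral_const_mul, intervalIntegral.integral_const_mul,
      intervalIntegral.integral_const_mul]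
    rfl
  -- integration by parts 1
  have ibp1 : (∫ x in (-1 : ℝ)..1, pd2 g (x, t) * deriv (fun y =>
        (hs y ^ 2 + 2 * (deriv hs y) ^ 2 - 4 * hs y * deriv (deriv hs) y) *
          pd1 g (y, t)) x) =
      - ∫ x in (-1 : ℝ)..1, pd1 (pd2 g) (x, t) *
        ((hs x ^ 2 + 2 * (deriv hs x) ^ 2 - 4 * hs x * deriv (deriv hs) x) *
          pd1 g (x, t)) := by
    rw [intervalIntegral.integral_mul_deriv_eq_deriv_mul
      (u := fun y => pd2 g (y, t)) (u' := fun x => pd1 (pd2 g) (x, t))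
      (v := fun y => (hs y ^ 2 + 2 * (deriv hs y) ^ 2 - 4 * hs y * deriv (deriv hs) y) *
          pd1 g (y, t))
      (v' := fun x => deriv (fun y =>
        (hs y ^ 2 + 2 * (deriv hs y) ^ 2 - 4 * hs y * deriv (deriv hs) y) *
          pd1 g (y, t)) x)
      (fun x _ => hasDerivAt_pd1 hq x t)
      (fun x _ => ((hvA.differentiable one_le_inf) x).hasDerivAt)
      (cm.intervalIntegrable _ _) (ca.intervalIntegrable _ _)]
    rw [bq1 t, bqm1 t]
    ring
  -- integration by parts 2a
  have w1 : deriv (fun y => hs y ^ 2 * pd1 (pd1 g) (y, t)) 1 = 0 := by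
    have hd := (((hhs.differentiable one_le_inf) 1).hasDerivAt.pow 2).mul
      (hasDerivAt_pd1 hu11 1 t)
    erw [hd.deriv, Pi.pow_apply, hs_one]
    norm_num
  have wm1 : deriv (fun y => hs y ^ 2 * pd1 (pd1 g) (y, t)) (-1) = 0 := by
    have hd := (((hhs.differentiable one_le_inf) (-1)).hasDerivAt.pow 2).mul
      (hasDerivAt_pd1 hu11 (-1) t)
    erw [hd.deriv, Pi.pow_apply, hs_neg_one]
    norm_num
  have ibp2a : (∫ x in (-1 : ℝ)..1, pd2 g (x, t) *
        deriv (deriv fun y => hs y ^ 2 * pd1 (pd1 g) (y, t)) x) =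
      - ∫ x in (-1 : ℝ)..1, pd1 (pd2 g) (x, t) *
        deriv (fun y => hs y ^ 2 * pd1 (pd1 g) (y, t)) x := by
    rw [intervalIntegral.integral_mul_deriv_eq_deriv_mul
      (u := fun y => pd2 g (y, t)) (u' := fun x => pd1 (pd2 g) (x, t))
      (v := deriv fun y => hs y ^ 2 * pd1 (pd1 g) (y, t))
      (v' := fun x => deriv (deriv fun y => hs y ^ 2 * pd1 (pd1 g) (y, t)) x)
      (fun x _ => hasDerivAt_pd1 hq x t)
      (fun x _ => (((cont_deriv hv2).differentiable one_le_inf) x).hasDerivAt)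
      (cm.intervalIntegrable _ _) (cb.intervalIntegrable _ _)]
    rw [w1, wm1]
    ring
  -- integration by parts 2b
  have ibp2b : (∫ x in (-1 : ℝ)..1, pd1 (pd2 g) (x, t) *
        deriv (fun y => hs y ^ 2 * pd1 (pd1 g) (y, t)) x) =
      - ∫ x in (-1 : ℝ)..1, pd1 (pd1 (pd2 g)) (x, t) *
        (hs x ^ 2 * pd1 (pd1 g) (x, t)) := by
    rw [intervalIntegral.integral_mul_deriv_eq_deriv_mul
      (u := fun y => pd1 (pd2 g) (y, t)) (u' := fun x => pd1 (pd1 (pd2 g)) (x, t))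
      (v := fun y => hs y ^ 2 * pd1 (pd1 g) (y, t))
      (v' := fun x => deriv (fun y => hs y ^ 2 * pd1 (pd1 g) (y, t)) x)
      (fun x _ => hasDerivAt_pd1 hm x t)
      (fun x _ => ((hv2.differentiable one_le_inf) x).hasDerivAt)
      (cmm.intervalIntegrable _ _) (cb1.intervalIntegrable _ _)]
    rw [hs_one, hs_neg_one]
    ring
  -- integration by parts 3
  have ibp3 : (∫ x in (-1 : ℝ)..1, pd2 g (x, t) *
        deriv (fun y => hs y * pd1 (pd2 g) (y, t)) x) =
      - ∫ x in (-1 : ℝ)..1, pd1 (pd2 g) (x, t) * (hs x * pd1 (pd2 g) (x, t)) := by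
    rw [intervalIntegral.integral_mul_deriv_eq_deriv_mul
      (u := fun y => pd2 g (y, t)) (u' := fun x => pd1 (pd2 g) (x, t))
      (v := fun y => hs y * pd1 (pd2 g) (y, t))
      (v' := fun x => deriv (fun y => hs y * pd1 (pd2 g) (y, t)) x)
      (fun x _ => hasDerivAt_pd1 hq x t)
      (fun x _ => ((hv3.differentiable one_le_inf) x).hasDerivAt)
      (cm.intervalIntegrable _ _) (cc.intervalIntegrable _ _)]
    rw [hs_one, hs_neg_one]
    ring
  -- reconcile integrand orderings
  have ePQ : (∫ x in (-1 : ℝ)..1, pd1 (pd2 g) (x, t) *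
        ((hs x ^ 2 + 2 * (deriv hs x) ^ 2 - 4 * hs x * deriv (deriv hs) x) *
          pd1 g (x, t))) =
      ∫ x in (-1 : ℝ)..1,
        (2 * (deriv hs x) ^ 2 - 4 * hs x * deriv (deriv hs) x + hs x ^ 2) *
          (pd1 g (x, t) * pd1 (pd2 g) (x, t)) := by
    apply intervalIntegral.integral_congr
    intro x _
    ring
  have eQ3 : (∫ x in (-1 : ℝ)..1, pd1 (pd1 (pd2 g)) (x, t) *
        (hs x ^ 2 * pd1 (pd1 g) (x, t))) =
      ∫ x in (-1 : ℝ)..1, hs x ^ 2 *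
        (pd1 (pd1 g) (x, t) * pd1 (pd1 (pd2 g)) (x, t)) := by
    apply intervalIntegral.integral_congr
    intro x _
    ring
  have eK : (∫ x in (-1 : ℝ)..1, pd1 (pd2 g) (x, t) * (hs x * pd1 (pd2 g) (x, t))) =
      ∫ ξ in (-1 : ℝ)..1, hs ξ * pd1 (pd2 g) (ξ, t) ^ 2 := by
    apply intervalIntegral.integral_congr
    intro x _
    ring
  rw [J, split, ibp1, ibp2a, ibp2b, ibp3, ePQ, eQ3, eK]
  ring
end
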